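/- arXiv:1407.1966 — 2 statements merged into one kernel-verified Lean document; each statement's English description precedes it below -/
import Mathlib

section
/- Let G be a finite abelian group and W ⊆ ℤ a nonempty set of weights. Let d, ℓ ∈ ℕ with d ≥ 2 and ℓ ≤ s_{W,≤d−1}(G). Then D_{W,⌈ℓ/d⌉}(G) ≥ ℓ. In particular, for each m ∈ ℕ one has D_{W,m}(G) ≥ m·e_W(G). -/
/-!
A sequence `T` with no `m` disjoint zero-subsums shows `D_{W,m}(G) > |T|`. For the first bound,
`ℓ ≤ s_{W,≤d-1}(G)` yields `T` of length `ℓ - 1` all of whose zero-subsums have length at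
least `d`, so `m = ⌈ℓ/d⌉` disjoint ones would need `m d ≥ ℓ` terms. For the second, take
`T = g^{m e_W(G) - 1}` with `ord g = exp(G)`: the weights of a zero-subsum of `T` sum to a
multiple of `exp(G)`, so it has length at least `e_W(G)`.
-/

open scoped BigOperators

/-- `l` encodes a `W`-weighted zero-subsum of the sequence (multiset) `S`:
a nonempty list of (weight, group element) pairs with weights in `W`, whose
group elements form a sub-multiset of `S` and whose weighted sum is zero. -/
def IsWZeroSubsum {G : Type*} [AddCommGroup G] (W : Set ℤ) (S : Multiset G)
    (l : List (ℤ × G)) : Prop :=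
  l ≠ [] ∧ (∀ p ∈ l, p.1 ∈ W) ∧ (↑(l.map Prod.snd) : Multiset G) ≤ S ∧
    (l.map fun p => p.1 • p.2).sum = 0

/-- `S` has a `W`-weighted zero-subsum whose length lies in `L`. -/
def HasWZeroSubsumLen {G : Type*} [AddCommGroup G] (W : Set ℤ) (S : Multiset G)
    (L : Set ℕ) : Prop :=
  ∃ l : List (ℤ × G), IsWZeroSubsum W S l ∧ l.length ∈ L

/-- `S` has `m` pairwise disjoint `W`-weighted zero-subsums. -/
def HasDisjointWZeroSubsums {G : Type*} [AddCommGroup G] (W : Set ℤ) (S : Multiset G)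
    (m : ℕ) : Prop :=
  ∃ ls : List (List (ℤ × G)), ls.length = m ∧
    (∀ l ∈ ls, l ≠ [] ∧ (∀ p ∈ l, p.1 ∈ W) ∧ (l.map fun p => p.1 • p.2).sum = 0) ∧
    (↑(ls.flatten.map Prod.snd) : Multiset G) ≤ S

/-- The `m`-wise `W`-weighted Davenport constant `D_{W,m}(G)`. -/
noncomputable def DW (W : Set ℤ) (G : Type*) [AddCommGroup G] (m : ℕ) : ℕ :=
  sInf {n : ℕ | ∀ S : Multiset G, n ≤ Multiset.card S → HasDisjointWZeroSubsums W S m}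

/-- The `L`-constrained `W`-weighted Davenport constant `s_{W,L}(G)`, valued in `ℕ∞`. -/
noncomputable def sWL (W : Set ℤ) (G : Type*) [AddCommGroup G] (L : Set ℕ) : ℕ∞ :=
  sInf {N : ℕ∞ | ∃ n : ℕ, N = (n : ℕ∞) ∧
    ∀ S : Multiset G, n ≤ Multiset.card S → HasWZeroSubsumLen W S L}

/-- The `d`-constrained `W`-weighted Davenport constant `s_{W,≤d}(G)`. -/
noncomputable def sWle (W : Set ℤ) (G : Type*) [AddCommGroup G] (d : ℕ) : ℕ∞ :=
  sWL W G {t | 1 ≤ t ∧ t ≤ d}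

/-- `e_W(G)`: the smallest `t ≥ 1` such that some `t` weights from `W` sum to a
multiple of `exp(G)`. -/
noncomputable def eW (W : Set ℤ) (G : Type*) [AddCommGroup G] : ℕ :=
  sInf {t : ℕ | 1 ≤ t ∧ ∃ w : Fin t → ℤ, (∀ i, w i ∈ W) ∧
    ((AddMonoid.exponent G : ℤ) ∣ ∑ i, w i)}

/-- `W` is multiplicatively closed modulo `n`. -/
def MulClosedMod (W : Set ℤ) (n : ℕ) : Prop :=
  ∀ w ∈ W, ∀ w' ∈ W, ∃ u ∈ W, (n : ℤ) ∣ w * w' - u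

lemma Multiset.exists_le_card_eq {α : Type*} {s : Multiset α} {n : ℕ} (hn : n ≤ card s) :
    ∃ t ≤ s, card t = n := by
  refine ⟨(s.toList.take n : List α), ?_, by simpa using hn⟩
  simpa using Multiset.coe_le.mpr (s.toList.take_sublist n).subperm

lemma Multiset.exists_le_count_of_card_mul_le {α : Type*} [Fintype α] [DecidableEq α]
    [Nonempty α] {S : Multiset α} {k : ℕ} (h : Fintype.card α * k ≤ card S) :
    ∃ a, k ≤ S.count a := by
  have : ∑ _a : α, k ≤ ∑ a, S.count a := by simpa [Multiset.sum_count_eq_card] using h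
  obtain ⟨a, -, ha⟩ := Finset.exists_le_of_sum_le Finset.univ_nonempty this
  exact ⟨a, ha⟩

section

variable {G : Type*} [AddCommGroup G] {W : Set ℤ}

lemma HasWZeroSubsumLen.mono {S T : Multiset G} {L : Set ℕ} (hST : S ≤ T)
    (h : HasWZeroSubsumLen W S L) : HasWZeroSubsumLen W T L := by
  obtain ⟨l, ⟨hne, hW, hle, hsum⟩, hL⟩ := h
  exact ⟨l, ⟨hne, hW, hle.trans hST, hsum⟩, hL⟩

lemma exists_card_eq_not_hasWZeroSubsumLen {L : Set ℕ} {n : ℕ}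
    (h : ((n + 1 : ℕ) : ℕ∞) ≤ sWL W G L) :
    ∃ S : Multiset G, Multiset.card S = n ∧ ¬ HasWZeroSubsumLen W S L := by
  have : ∃ S : Multiset G, n ≤ Multiset.card S ∧ ¬ HasWZeroSubsumLen W S L := by
    by_contra! hall
    have : sWL W G L ≤ n := sInf_le ⟨n, rfl, hall⟩
    have := h.trans this
    norm_cast at this
    omega
  obtain ⟨S, hS, hno⟩ := this
  obtain ⟨T, hTS, hT⟩ := Multiset.exists_le_card_eq hS
  exact ⟨T, hT, fun h ↦ hno (h.mono hTS)⟩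

lemma HasDisjointWZeroSubsums.mul_le_card {S : Multiset G} {m d : ℕ}
    (h : HasDisjointWZeroSubsums W S m)
    (hd : ∀ l, IsWZeroSubsum W S l → d ≤ l.length) : m * d ≤ Multiset.card S := by
  obtain ⟨ls, rfl, hls, hle⟩ := h
  have hlen : ∀ l ∈ ls, d ≤ l.length := fun l hl ↦ by
    obtain ⟨hne, hW, hsum⟩ := hls l hl
    refine hd l ⟨hne, hW, le_trans ?_ hle, hsum⟩
    exact Multiset.coe_le.mpr ((List.sublist_flatten_of_mem hl).map Prod.snd).subperm
  calc ls.length * d = (ls.map fun _ ↦ d).sum := by simp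
    _ ≤ (ls.map List.length).sum := List.sum_le_sum hlen
    _ = Multiset.card (↑(ls.flatten.map Prod.snd) : Multiset G) := by
      simp [List.length_flatten, Function.comp_def]
    _ ≤ Multiset.card S := Multiset.card_le_card hle

lemma hasDisjointWZeroSubsums_of_mul_le_count [DecidableEq G] {S : Multiset G} {m : ℕ}
    {w : ℤ} {g : G} (hw : w ∈ W) (hg : IsOfFinAddOrder g)
    (hcount : m * addOrderOf g ≤ S.count g) :
    HasDisjointWZeroSubsums W S m := by
  refine ⟨List.replicate m (List.replicate (addOrderOf g) (w, g)), by simp, ?_, ?_⟩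
  · intro l hl
    rw [List.eq_of_mem_replicate hl]
    refine ⟨by simpa using hg.addOrderOf_pos.ne', fun p hp ↦ ?_, ?_⟩
    · rw [List.eq_of_mem_replicate hp]
      exact hw
    · simp [smul_comm (addOrderOf g) w g]
  · rw [List.flatten_replicate_replicate, List.map_replicate, Multiset.coe_replicate]
    exact Multiset.le_count_iff_replicate_le.mp hcount

lemma eW_le_length {ws : List ℤ} (hne : ws ≠ []) (hW : ∀ w ∈ ws, w ∈ W)
    (hdvd : (AddMonoid.exponent G : ℤ) ∣ ws.sum) : eW W G ≤ ws.length := by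
  refine Nat.sInf_le ⟨List.length_pos_iff.mpr hne, fun i ↦ ws[i.1],
    fun i ↦ hW _ (List.getElem_mem i.2), ?_⟩
  simpa using hdvd

lemma eW_le_length_of_isWZeroSubsum_replicate {g : G}
    (hg : addOrderOf g = AddMonoid.exponent G) {n : ℕ} {l : List (ℤ × G)}
    (hl : IsWZeroSubsum W (Multiset.replicate n g) l) : eW W G ≤ l.length := by
  obtain ⟨hne, hW, hle, hsum⟩ := hl
  have hg_eq : ∀ p ∈ l, p.2 = g := fun p hp ↦
    Multiset.eq_of_mem_replicate (Multiset.mem_of_le hle (List.mem_map_of_mem hp))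
  have hzero : (l.map Prod.fst).sum • g = 0 := by
    rw [← hsum, List.sum_smul, List.map_map]
    exact congrArg List.sum (List.map_congr_left fun p hp ↦ by simp [hg_eq p hp])
  have hdvd := hg ▸ addOrderOf_dvd_iff_zsmul_eq_zero.mpr hzero
  simpa using eW_le_length (by simpa using hne) (by simpa using hW) hdvd

variable [Fintype G]

lemma hasDisjointWZeroSubsums_of_le_card (hW : W.Nonempty) (m : ℕ)
    {S : Multiset G} (h : Fintype.card G * (m * AddMonoid.exponent G) ≤ Multiset.card S) :
    HasDisjointWZeroSubsums W S m := by
  classical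
  obtain ⟨w, hw⟩ := hW
  obtain ⟨g, hg⟩ := Multiset.exists_le_count_of_card_mul_le h
  refine hasDisjointWZeroSubsums_of_mul_le_count hw (isOfFinAddOrder_of_finite g) ?_
  exact (Nat.mul_le_mul_left m
    (AddMonoid.addOrderOf_le_exponent AddMonoid.ExponentExists.of_finite g)).trans hg

lemma card_lt_DW_of_not_hasDisjointWZeroSubsums (hW : W.Nonempty) {m : ℕ}
    {S : Multiset G} (h : ¬ HasDisjointWZeroSubsums W S m) : Multiset.card S < DW W G m := by
  by_contra! hle
  have hne :
      {n | ∀ S : Multiset G, n ≤ Multiset.card S → HasDisjointWZeroSubsums W S m}.Nonempty :=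
    ⟨_, fun _ ↦ hasDisjointWZeroSubsums_of_le_card hW m⟩
  exact h (Nat.sInf_mem hne S hle)

theorem le_DW_ceilDiv_of_le_sWle (hW : W.Nonempty) {d ℓ : ℕ} (hd : 0 < d)
    (hℓ : (ℓ : ℕ∞) ≤ sWle W G (d - 1)) : ℓ ≤ DW W G ((ℓ + d - 1) / d) := by
  obtain _ | n := ℓ
  · exact Nat.zero_le _
  obtain ⟨S, hS, hno⟩ := exists_card_eq_not_hasWZeroSubsumLen hℓ
  have hlong : ∀ l, IsWZeroSubsum W S l → d ≤ l.length := fun l hl ↦ by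
    by_contra! hshort
    exact hno ⟨l, hl, List.length_pos_iff.mpr hl.1, by omega⟩
  have hceil : n + 1 ≤ d * ((n + 1 + d - 1) / d) := le_smul_ceilDiv (b := n + 1) hd
  have hnot : ¬ HasDisjointWZeroSubsums W S ((n + 1 + d - 1) / d) := fun h ↦ by
    have := h.mul_le_card hlong
    rw [Nat.mul_comm] at this
    omega
  have := card_lt_DW_of_not_hasDisjointWZeroSubsums hW hnot
  omega

theorem mul_eW_le_DW (hW : W.Nonempty) (m : ℕ) : m * eW W G ≤ DW W G m := by
  obtain h0 | hpos := Nat.eq_zero_or_pos (m * eW W G)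
  · exact h0 ▸ Nat.zero_le _
  obtain ⟨g, hg⟩ := AddMonoid.exists_addOrderOf_eq_exponent (G := G) .of_finite
  set S := Multiset.replicate (m * eW W G - 1) g
  have hnot : ¬ HasDisjointWZeroSubsums W S m := fun h ↦ by
    have := h.mul_le_card fun _ ↦ eW_le_length_of_isWZeroSubsum_replicate hg
    simp only [S, Multiset.card_replicate] at this
    omega
  have := card_lt_DW_of_not_hasDisjointWZeroSubsums hW hnot
  simp only [S, Multiset.card_replicate] at this
  omega

end

/-- if `d ≥ 2` and `ℓ ≤ s_{W,≤d-1}(G)` then `D_{W,⌈ℓ/d⌉}(G) ≥ ℓ`;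
in particular `D_{W,m}(G) ≥ m·e_W(G)` for each `m`. -/
theorem stmt3 {G : Type*} [AddCommGroup G] [Fintype G] (W : Set ℤ) (hW : W.Nonempty) :
    (∀ d ℓ : ℕ, 2 ≤ d → 1 ≤ ℓ → (ℓ : ℕ∞) ≤ sWle W G (d - 1) →
      ℓ ≤ DW W G ((ℓ + d - 1) / d)) ∧
    (∀ m : ℕ, 1 ≤ m → m * eW W G ≤ DW W G m) :=
  ⟨fun _ _ hd _ hℓ ↦ le_DW_ceilDiv_of_le_sWle hW (by omega) hℓ,
    fun m _ ↦ mul_eW_le_DW hW m⟩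
end

section
/- Let G be a finite abelian group and let W ⊆ ℤ be a nonempty set of weights that is multiplicatively closed modulo exp(G) and with e_W(G) = 2. Then D_{W,m+1}(G) = D_{W,m}(G) + 2 for every m ≥ |G|. -/
open scoped BigOperators

/-!
Since `e_W(G) = 2` there are `w₁, w₂ ∈ W` with `w₁ + w₂ ≡ 0 (mod exp G)`, so any repeated
element `g, g` of a sequence is a weighted zero-subsum of length two. A sequence of length
`D_{W,m}(G) + 2 > |G|` has a repeated element, and splitting off that pair gives
`D_{W,m+1} ≤ D_{W,m} + 2`.

Conversely, let `T` be a sequence of length `D_{W,m}(G) - 1` without `m` disjoint zero-subsums,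
let `g` have order `exp G`, and suppose `g g T` had `m + 1` of them. If at most one of them
contains `g`, discarding it leaves `m` in `T`. Otherwise two of them read `w g + A = 0` and
`w' g + B = 0`, and `w₁ w' A + w₂ w B` is a zero-subsum of `T`, since
`w₁ w' w + w₂ w w' = (w₁ + w₂) w w' ≡ 0`; by multiplicative closure its weights can be taken in
`W`, and it is nonempty because `e_W(G) ≠ 1` forces `w g ≠ 0`. Replacing the two by this one
again leaves `m` disjoint zero-subsums in `T`.
-/

section

variable {G : Type*}

def familySupport (ls : List (List (ℤ × G))) : Multiset G := ↑(ls.flatten.map Prod.snd)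

@[simp]
lemma familySupport_cons (l : List (ℤ × G)) (ls : List (List (ℤ × G))) :
    familySupport (l :: ls) = ↑(l.map Prod.snd) + familySupport ls := by
  simp [familySupport]

lemma List.Perm.familySupport_eq {ls ls' : List (List (ℤ × G))} (h : ls.Perm ls') :
    familySupport ls = familySupport ls' :=
  Multiset.coe_eq_coe.mpr (h.flatten.map _)

lemma length_le_card_familySupport {ls : List (List (ℤ × G))} (hls : ∀ l ∈ ls, l ≠ []) :
    ls.length ≤ Multiset.card (familySupport ls) := by
  induction ls with
  | nil => simp
  | cons l ls ih =>
    have hl : 0 < l.length := List.length_pos_iff.mpr (hls l List.mem_cons_self)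
    have := ih fun l' hl' => hls l' (List.mem_cons_of_mem _ hl')
    simp only [List.length_cons, familySupport_cons, Multiset.card_add, Multiset.coe_card,
      List.length_map]
    omega

lemma Multiset.exists_eq_cons_cons_of_card_lt [Fintype G] {S : Multiset G}
    (h : Fintype.card G < Multiset.card S) : ∃ g T, S = g ::ₘ g ::ₘ T := by
  by_contra! hS
  induction S using Quotient.inductionOn with
  | h l =>
    have := (Multiset.coe_nodup.mp (Multiset.nodup_iff_ne_cons_cons.mpr hS)).length_le_card
    simp only [Multiset.quot_mk_to_coe, Multiset.coe_card] at h
    omega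

variable [AddCommGroup G] {W : Set ℤ}

def weightedSum (l : List (ℤ × G)) : G := (l.map fun p => p.1 • p.2).sum

@[simp]
lemma weightedSum_nil : weightedSum ([] : List (ℤ × G)) = 0 := rfl

@[simp]
lemma weightedSum_cons (p : ℤ × G) (l : List (ℤ × G)) :
    weightedSum (p :: l) = p.1 • p.2 + weightedSum l := by
  simp [weightedSum]

@[simp]
lemma weightedSum_append (l l' : List (ℤ × G)) :
    weightedSum (l ++ l') = weightedSum l + weightedSum l' := by
  simp [weightedSum]

lemma List.Perm.weightedSum_eq {l l' : List (ℤ × G)} (h : l.Perm l') :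
    weightedSum l = weightedSum l' :=
  (h.map _).sum_eq

def IsWZeroSum (W : Set ℤ) (l : List (ℤ × G)) : Prop :=
  l ≠ [] ∧ (∀ p ∈ l, p.1 ∈ W) ∧ weightedSum l = 0

lemma IsWZeroSum.perm {l l' : List (ℤ × G)} (h : IsWZeroSum W l) (hp : l.Perm l') :
    IsWZeroSum W l' :=
  ⟨fun h' => h.1 (h' ▸ hp).eq_nil,
    fun p hpl => h.2.1 p (hp.symm.subset hpl), hp.weightedSum_eq ▸ h.2.2⟩

lemma hasDisjointWZeroSubsums_iff {S : Multiset G} {m : ℕ} :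
    HasDisjointWZeroSubsums W S m ↔
      ∃ ls : List (List (ℤ × G)), ls.length = m ∧ (∀ l ∈ ls, IsWZeroSum W l) ∧
        familySupport ls ≤ S :=
  Iff.rfl

lemma HasDisjointWZeroSubsums.le_card {S : Multiset G} {m : ℕ}
    (h : HasDisjointWZeroSubsums W S m) : m ≤ Multiset.card S := by
  obtain ⟨ls, rfl, hls, hsupp⟩ := hasDisjointWZeroSubsums_iff.mp h
  exact (length_le_card_familySupport fun l hl => (hls l hl).1).trans
    (Multiset.card_le_card hsupp)

lemma hasDisjointWZeroSubsums_cons_cons {w₁ w₂ : ℤ} (hw₁ : w₁ ∈ W) (hw₂ : w₂ ∈ W)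
    (hsum : (AddMonoid.exponent G : ℤ) ∣ w₁ + w₂) {T : Multiset G} {m : ℕ} (g : G)
    (h : HasDisjointWZeroSubsums W T m) :
    HasDisjointWZeroSubsums W (g ::ₘ g ::ₘ T) (m + 1) := by
  obtain ⟨ls, hlen, hls, hsupp⟩ := hasDisjointWZeroSubsums_iff.mp h
  have hpair : IsWZeroSum W [(w₁, g), (w₂, g)] := by
    refine ⟨List.cons_ne_nil _ _, ?_, ?_⟩
    · simp [hw₁, hw₂]
    · simpa [← add_smul] using AddGroup.exponent_dvd_iff_forall_zsmul_eq_zero.mp hsum g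
  refine hasDisjointWZeroSubsums_iff.mpr
    ⟨[(w₁, g), (w₂, g)] :: ls, by simp [hlen], List.forall_mem_cons.mpr ⟨hpair, hls⟩, ?_⟩
  rw [familySupport_cons]
  exact Multiset.cons_le_cons g (Multiset.cons_le_cons g hsupp)

lemma hasDisjointWZeroSubsums_succ [Fintype G] {w₁ w₂ : ℤ} (hw₁ : w₁ ∈ W) (hw₂ : w₂ ∈ W)
    (hsum : (AddMonoid.exponent G : ℤ) ∣ w₁ + w₂) {m n : ℕ}
    (hn : ∀ S : Multiset G, n ≤ Multiset.card S → HasDisjointWZeroSubsums W S m)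
    (hG : Fintype.card G < n + 2) (S : Multiset G) (hS : n + 2 ≤ Multiset.card S) :
    HasDisjointWZeroSubsums W S (m + 1) := by
  obtain ⟨g, T, rfl⟩ := Multiset.exists_eq_cons_cons_of_card_lt (S := S) (by omega)
  exact hasDisjointWZeroSubsums_cons_cons hw₁ hw₂ hsum g (hn T (by simpa using hS))

lemma hasDisjointWZeroSubsums_of_card_le [Fintype G] {w₁ w₂ : ℤ} (hw₁ : w₁ ∈ W)
    (hw₂ : w₂ ∈ W) (hsum : (AddMonoid.exponent G : ℤ) ∣ w₁ + w₂) (m : ℕ) (S : Multiset G)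
    (hS : Fintype.card G + 2 * m ≤ Multiset.card S) : HasDisjointWZeroSubsums W S m := by
  induction m generalizing S with
  | zero => exact ⟨[], rfl, by simp, by simp⟩
  | succ m ih => exact hasDisjointWZeroSubsums_succ hw₁ hw₂ hsum ih (by omega) S (by omega)

lemma exists_reweighting_weightedSum_eq_smul (hmul : MulClosedMod W (AddMonoid.exponent G))
    {v : ℤ} (hv : v ∈ W) (A : List (ℤ × G)) (hA : ∀ p ∈ A, p.1 ∈ W) :
    ∃ A' : List (ℤ × G), (∀ p ∈ A', p.1 ∈ W) ∧ A'.map Prod.snd = A.map Prod.snd ∧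
      weightedSum A' = v • weightedSum A := by
  induction A with
  | nil => exact ⟨[], by simp⟩
  | cons p A ih =>
    obtain ⟨hp, hA⟩ := List.forall_mem_cons.mp hA
    obtain ⟨A', hA'W, hA'snd, hA'sum⟩ := ih hA
    obtain ⟨u, hu, hvu⟩ := hmul v hv p.1 hp
    refine ⟨(u, p.2) :: A', List.forall_mem_cons.mpr ⟨hu, hA'W⟩, by simp [hA'snd], ?_⟩
    rw [weightedSum_cons, weightedSum_cons, hA'sum, smul_add, smul_smul,
      AddGroup.exponent_dvd_sub_iff_zsmul_eq_zsmul.mp hvu]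

lemma IsWZeroSum.exists_merge (hmul : MulClosedMod W (AddMonoid.exponent G)) {w₁ w₂ : ℤ}
    (hw₁ : w₁ ∈ W) (hw₂ : w₂ ∈ W) (hsum : (AddMonoid.exponent G : ℤ) ∣ w₁ + w₂)
    (hno : ∀ w ∈ W, ¬ (AddMonoid.exponent G : ℤ) ∣ w) {g : G}
    (hg : addOrderOf g = AddMonoid.exponent G) {w w' : ℤ} {A B : List (ℤ × G)}
    (hA : IsWZeroSum W ((w, g) :: A)) (hB : IsWZeroSum W ((w', g) :: B)) :
    ∃ C, IsWZeroSum W C ∧ C.map Prod.snd = A.map Prod.snd ++ B.map Prod.snd := by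
  obtain ⟨-, hAW, hAsum⟩ := hA
  obtain ⟨-, hBW, hBsum⟩ := hB
  obtain ⟨hw, hAW⟩ := List.forall_mem_cons.mp hAW
  obtain ⟨hw', hBW⟩ := List.forall_mem_cons.mp hBW
  simp only [weightedSum_cons] at hw hw' hAsum hBsum
  obtain ⟨v₁, hv₁, hv₁d⟩ := hmul w₁ hw₁ w' hw'
  obtain ⟨v₂, hv₂, hv₂d⟩ := hmul w₂ hw₂ w hw
  obtain ⟨A', hA'W, hA'snd, hA'sum⟩ := exists_reweighting_weightedSum_eq_smul hmul hv₁ A hAW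
  obtain ⟨B', hB'W, hB'snd, hB'sum⟩ := exists_reweighting_weightedSum_eq_smul hmul hv₂ B hBW
  have hAne : A' ≠ [] := by
    rintro rfl
    obtain rfl : A = [] := by simpa using hA'snd.symm
    exact hno w hw (hg ▸ addOrderOf_dvd_iff_zsmul_eq_zero.mpr (by simpa using hAsum))
  have hdvd : (AddMonoid.exponent G : ℤ) ∣ v₁ * w + v₂ * w' := by
    rw [show v₁ * w + v₂ * w' =
        (w₁ + w₂) * (w * w') - ((w₁ * w' - v₁) * w + (w₂ * w - v₂) * w') by ring]
    exact dvd_sub (dvd_mul_of_dvd_left hsum _)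
      (dvd_add (dvd_mul_of_dvd_left hv₁d w) (dvd_mul_of_dvd_left hv₂d w'))
  refine ⟨A' ++ B', ⟨List.append_ne_nil_of_left_ne_nil hAne _, ?_, ?_⟩, by simp [hA'snd, hB'snd]⟩
  · exact fun p hp => (List.mem_append.mp hp).elim (hA'W p) (hB'W p)
  · rw [weightedSum_append, hA'sum, hB'sum, eq_neg_of_add_eq_zero_right hAsum,
      eq_neg_of_add_eq_zero_right hBsum, smul_neg, smul_neg, smul_smul, smul_smul, ← neg_add,
      ← add_smul, AddGroup.exponent_dvd_iff_forall_zsmul_eq_zero.mp hdvd, neg_zero]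

lemma exists_isWZeroSum_cons_of_mem_familySupport {ls : List (List (ℤ × G))}
    (hls : ∀ l ∈ ls, IsWZeroSum W l) {a : G} (ha : a ∈ familySupport ls) :
    ∃ (w : ℤ) (A : List (ℤ × G)) (rest : List (List (ℤ × G))),
      IsWZeroSum W ((w, a) :: A) ∧ (∀ l ∈ rest, IsWZeroSum W l) ∧
      rest.length + 1 = ls.length ∧
      familySupport ls = a ::ₘ (↑(A.map Prod.snd) + familySupport rest) := by
  classical
  obtain ⟨p, hp, rfl⟩ := List.mem_map.mp (Multiset.mem_coe.mp ha)
  obtain ⟨l, hl, hpl⟩ := List.mem_flatten.mp hp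
  have hls' := List.perm_cons_erase hl
  have hl' := List.perm_cons_erase hpl
  refine ⟨p.1, l.erase p, ls.erase l, (hls l hl).perm hl',
    fun l' hl'' => hls l' (List.mem_of_mem_erase hl''), ?_, ?_⟩
  · rw [List.length_erase_of_mem hl]
    have := List.length_pos_of_mem hl
    omega
  · rw [hls'.familySupport_eq, familySupport_cons, Multiset.coe_eq_coe.mpr (hl'.map _),
      List.map_cons, ← Multiset.cons_coe, Multiset.cons_add]

lemma hasDisjointWZeroSubsums_of_cons_cons (hmul : MulClosedMod W (AddMonoid.exponent G))
    {w₁ w₂ : ℤ} (hw₁ : w₁ ∈ W) (hw₂ : w₂ ∈ W) (hsum : (AddMonoid.exponent G : ℤ) ∣ w₁ + w₂)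
    (hno : ∀ w ∈ W, ¬ (AddMonoid.exponent G : ℤ) ∣ w) {g : G}
    (hg : addOrderOf g = AddMonoid.exponent G) {T : Multiset G} {m : ℕ}
    (h : HasDisjointWZeroSubsums W (g ::ₘ g ::ₘ T) (m + 1)) :
    HasDisjointWZeroSubsums W T m := by
  obtain ⟨ls, hlen, hls, hsupp⟩ := hasDisjointWZeroSubsums_iff.mp h
  by_cases hgls : g ∉ familySupport ls
  · obtain _ | ⟨l, rest⟩ := ls
    · simp at hlen
    · rw [Multiset.le_cons_of_notMem hgls, Multiset.le_cons_of_notMem hgls] at hsupp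
      refine ⟨rest, by simpa using hlen, fun l' hl' => hls l' (List.mem_cons_of_mem _ hl'), ?_⟩
      exact (Multiset.le_add_left _ _).trans (familySupport_cons l rest ▸ hsupp)
  obtain ⟨w, A, rest, hA, hrest, hlen', hsupp'⟩ :=
    exists_isWZeroSum_cons_of_mem_familySupport hls (not_not.mp hgls)
  rw [hsupp', Multiset.cons_le_cons_iff] at hsupp
  by_cases hgrest : g ∉ familySupport rest
  · exact ⟨rest, by omega, hrest,
      (Multiset.le_cons_of_notMem hgrest).mp ((Multiset.le_add_left _ _).trans hsupp)⟩
  obtain ⟨w', B, rest', hB, hrest', hlen'', hsupp''⟩ :=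
    exists_isWZeroSum_cons_of_mem_familySupport hrest (not_not.mp hgrest)
  rw [hsupp'', Multiset.add_cons, Multiset.cons_le_cons_iff, ← add_assoc] at hsupp
  obtain ⟨C, hC, hCsnd⟩ := hA.exists_merge hmul hw₁ hw₂ hsum hno hg hB
  refine hasDisjointWZeroSubsums_iff.mpr
    ⟨C :: rest', by simp; omega, List.forall_mem_cons.mpr ⟨hC, hrest'⟩, ?_⟩
  rwa [familySupport_cons, hCsnd, ← Multiset.coe_add]

lemma hasDisjointWZeroSubsums_of_DW_le {m n : ℕ}
    (hn : ∀ S : Multiset G, n ≤ Multiset.card S → HasDisjointWZeroSubsums W S m)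
    (S : Multiset G) (hS : DW W G m ≤ Multiset.card S) : HasDisjointWZeroSubsums W S m :=
  Nat.sInf_mem (s := {n : ℕ | ∀ S : Multiset G, n ≤ Multiset.card S →
    HasDisjointWZeroSubsums W S m}) ⟨n, hn⟩ S hS

lemma DW_le {m n : ℕ}
    (hn : ∀ S : Multiset G, n ≤ Multiset.card S → HasDisjointWZeroSubsums W S m) :
    DW W G m ≤ n :=
  Nat.sInf_le hn

lemma le_DW {m n : ℕ}
    (hn : ∀ S : Multiset G, n ≤ Multiset.card S → HasDisjointWZeroSubsums W S m) :
    m ≤ DW W G m := by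
  simpa using (hasDisjointWZeroSubsums_of_DW_le hn (Multiset.replicate (DW W G m) 0)
    (by simp)).le_card

lemma exists_not_hasDisjointWZeroSubsums_of_lt_DW {m n : ℕ} (h : n < DW W G m) :
    ∃ S : Multiset G, n ≤ Multiset.card S ∧ ¬ HasDisjointWZeroSubsums W S m := by
  simpa using Nat.notMem_of_lt_sInf h

lemma DW_succ_le [Fintype G] {w₁ w₂ : ℤ} (hw₁ : w₁ ∈ W) (hw₂ : w₂ ∈ W)
    (hsum : (AddMonoid.exponent G : ℤ) ∣ w₁ + w₂) {m n : ℕ}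
    (hn : ∀ S : Multiset G, n ≤ Multiset.card S → HasDisjointWZeroSubsums W S m)
    (hG : Fintype.card G ≤ DW W G m + 1) : DW W G (m + 1) ≤ DW W G m + 2 :=
  DW_le (hasDisjointWZeroSubsums_succ hw₁ hw₂ hsum (hasDisjointWZeroSubsums_of_DW_le hn)
    (by omega))

lemma DW_add_two_le_DW_succ (hmul : MulClosedMod W (AddMonoid.exponent G))
    {w₁ w₂ : ℤ} (hw₁ : w₁ ∈ W) (hw₂ : w₂ ∈ W) (hsum : (AddMonoid.exponent G : ℤ) ∣ w₁ + w₂)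
    (hno : ∀ w ∈ W, ¬ (AddMonoid.exponent G : ℤ) ∣ w) {g : G}
    (hg : addOrderOf g = AddMonoid.exponent G) {m n : ℕ}
    (hn : ∀ S : Multiset G, n ≤ Multiset.card S → HasDisjointWZeroSubsums W S (m + 1))
    (hpos : 0 < DW W G m) : DW W G m + 2 ≤ DW W G (m + 1) := by
  obtain ⟨T, hT, hTm⟩ := exists_not_hasDisjointWZeroSubsums_of_lt_DW (Nat.sub_one_lt hpos.ne')
  by_contra! hlt
  refine hTm (hasDisjointWZeroSubsums_of_cons_cons hmul hw₁ hw₂ hsum hno hg ?_)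
  exact hasDisjointWZeroSubsums_of_DW_le hn _ (by simp; omega)

lemma exists_dvd_add_of_eW_eq_two (he : eW W G = 2) :
    ∃ w₁ ∈ W, ∃ w₂ ∈ W, (AddMonoid.exponent G : ℤ) ∣ w₁ + w₂ := by
  unfold eW at he
  obtain ⟨-, w, hw, hdvd⟩ := he ▸ Nat.sInf_mem (Nat.nonempty_of_sInf_eq_succ he)
  exact ⟨w 0, hw 0, w 1, hw 1, by simpa [Fin.sum_univ_two] using hdvd⟩

lemma eW_le_one_of_dvd {w : ℤ} (hw : w ∈ W) (hdvd : (AddMonoid.exponent G : ℤ) ∣ w) :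
    eW W G ≤ 1 :=
  Nat.sInf_le ⟨le_rfl, fun _ => w, fun _ => hw, by simpa using hdvd⟩

end

theorem stmt11_general {G : Type*} [AddCommGroup G] [Fintype G] (W : Set ℤ)
    (hmul : MulClosedMod W (AddMonoid.exponent G)) (he : eW W G = 2) :
    ∀ m : ℕ, Fintype.card G ≤ m → DW W G (m + 1) = DW W G m + 2 := by
  intro m hm
  obtain ⟨w₁, hw₁, w₂, hw₂, hsum⟩ := exists_dvd_add_of_eW_eq_two he
  have hno : ∀ w ∈ W, ¬ (AddMonoid.exponent G : ℤ) ∣ w := fun w hw hdvd => by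
    have := eW_le_one_of_dvd hw hdvd
    omega
  obtain ⟨g, hg⟩ := AddMonoid.exists_addOrderOf_eq_exponent (.of_finite (G := G))
  have hbound := hasDisjointWZeroSubsums_of_card_le hw₁ hw₂ hsum
  have hmDW : m ≤ DW W G m := le_DW (hbound m)
  have hG : 0 < Fintype.card G := Fintype.card_pos
  exact le_antisymm (DW_succ_le hw₁ hw₂ hsum (hbound m) (by omega))
    (DW_add_two_le_DW_succ hmul hw₁ hw₂ hsum hno hg (hbound (m + 1)) (by omega))

/-- if `W` is multiplicatively closed modulo `exp(G)` and `e_W(G) = 2`,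
then `D_{W,m+1}(G) = D_{W,m}(G) + 2` for every `m ≥ |G|`. -/
theorem stmt11 {G : Type*} [AddCommGroup G] [Fintype G] (W : Set ℤ) (hW : W.Nonempty)
    (hmul : MulClosedMod W (AddMonoid.exponent G)) (he : eW W G = 2) :
    ∀ m : ℕ, Fintype.card G ≤ m → DW W G (m + 1) = DW W G m + 2 :=
  stmt11_general W hmul he
end
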